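/- Let (u, θ, q) be a smooth solution of the thermoviscoelastic system with second sound satisfying boundary conditions (D). Then for all t > 0, F₁′(t) = −2 E₁(t) + R₁(t), where R₁(t) = ∫₀ᴸ θ² dx + τ ∫₀ᴸ q² dx + 2 ∫₀ᴸ m u_t² dx − η ∫₀ᴸ u θ_x dx. -/

import Mathlib

open MeasureTheory Set intervalIntegral

noncomputable section

/-- Time derivative of a function of `(x, t)` (curried as `x ↦ t ↦ f x t`). -/
def pdt (f : ℝ → ℝ → ℝ) : ℝ → ℝ → ℝ := fun x t => deriv (f x) t

/-- Space derivative of a function of `(x, t)`. -/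
def pdx (f : ℝ → ℝ → ℝ) : ℝ → ℝ → ℝ := fun x t => deriv (fun y => f y t) x

section Helpers
open Filter Function
open scoped ContDiff Interval

theorem one_le_inf' : (∞ : WithTop ℕ∞) ≠ 0 := by simp

variable {f : ℝ → ℝ → ℝ}

theorem hasDerivAt_pdx (hf : ContDiff ℝ ∞ (uncurry f)) (x t : ℝ) :
    HasDerivAt (fun y => f y t) (pdx f x t) x := by
  have hd : DifferentiableAt ℝ (fun y => f y t) x :=
    by have h := ((hf.differentiable one_le_inf') (x, t)).comp x
        (DifferentiableAt.prodMk (differentiableAt_id (𝕜 := ℝ)) (differentiableAt_const t))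
       exact h
  exact hd.hasDerivAt

theorem hasDerivAt_pdt (hf : ContDiff ℝ ∞ (uncurry f)) (x t : ℝ) :
    HasDerivAt (fun s => f x s) (pdt f x t) t := by
  have hd : DifferentiableAt ℝ (fun s => f x s) t :=
    ((hf.differentiable one_le_inf') (x, t)).comp t
      (DifferentiableAt.prodMk (differentiableAt_const x) differentiableAt_id)
  exact hd.hasDerivAt

theorem pdx_eq_fderiv (hf : ContDiff ℝ ∞ (uncurry f)) (x t : ℝ) :
    pdx f x t = fderiv ℝ (uncurry f) (x, t) (1, 0) := by
  have h1 : HasDerivAt (fun y : ℝ => (y, t)) ((1 : ℝ), (0 : ℝ)) x :=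
    HasDerivAt.prodMk (hasDerivAt_id x) (hasDerivAt_const x t)
  have h2 := ((hf.differentiable one_le_inf') (x, t)).hasFDerivAt.comp_hasDerivAt x h1
  have h3 : HasDerivAt (fun y => f y t) (fderiv ℝ (uncurry f) (x, t) (1, 0)) x := h2
  exact h3.deriv

theorem pdt_eq_fderiv (hf : ContDiff ℝ ∞ (uncurry f)) (x t : ℝ) :
    pdt f x t = fderiv ℝ (uncurry f) (x, t) (0, 1) := by
  have h1 : HasDerivAt (fun s : ℝ => (x, s)) ((0 : ℝ), (1 : ℝ)) t :=
    HasDerivAt.prodMk (hasDerivAt_const t x) (hasDerivAt_id t)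
  have h2 := ((hf.differentiable one_le_inf') (x, t)).hasFDerivAt.comp_hasDerivAt t h1
  have h3 : HasDerivAt (fun s => f x s) (fderiv ℝ (uncurry f) (x, t) (0, 1)) t := h2
  exact h3.deriv

theorem contDiff_pdx (hf : ContDiff ℝ ∞ (uncurry f)) : ContDiff ℝ ∞ (uncurry (pdx f)) := by
  have : uncurry (pdx f) = fun p : ℝ × ℝ => fderiv ℝ (uncurry f) p (1, 0) := by
    funext p
    exact pdx_eq_fderiv hf p.1 p.2
  rw [this]
  exact (contDiff_infty_iff_fderiv.1 hf).2.clm_apply contDiff_const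

theorem contDiff_pdt (hf : ContDiff ℝ ∞ (uncurry f)) : ContDiff ℝ ∞ (uncurry (pdt f)) := by
  have : uncurry (pdt f) = fun p : ℝ × ℝ => fderiv ℝ (uncurry f) p (0, 1) := by
    funext p
    exact pdt_eq_fderiv hf p.1 p.2
  rw [this]
  exact (contDiff_infty_iff_fderiv.1 hf).2.clm_apply contDiff_const

theorem cont_slice (hf : ContDiff ℝ ∞ (uncurry f)) (t : ℝ) : Continuous fun x => f x t :=
  hf.continuous.comp (continuous_id.prodMk continuous_const)

theorem contDiff_slice (hf : ContDiff ℝ ∞ (uncurry f)) (t : ℝ) :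
    ContDiff ℝ ∞ fun x => f x t :=
  hf.comp (ContDiff.prodMk contDiff_id contDiff_const)

/-- FTC inequality for monotone functions. -/
theorem mono_int_deriv_le {f : ℝ → ℝ} (hf : Monotone f) (hc : Continuous f) {a b : ℝ}
    (hab : a ≤ b) : ∫ x in a..b, deriv f x ≤ f b - f a := by
  set μ := hf.stieltjesFunction.measure with hμ
  have hst : ∀ x, hf.stieltjesFunction x = f x := by
    intro x
    rw [hf.stieltjesFunction_eq]
    exact rightLim_eq_of_tendsto
      ((hc.tendsto x).mono_left nhdsWithin_le_nhds)
  have hae : ∀ᵐ x, deriv f x = (μ.rnDeriv volume x).toReal := by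
    filter_upwards [hf.ae_hasDerivAt] with x hx using hx.deriv
  have h1 : ∫ x in a..b, deriv f x = ∫ x in Ioc a b, (μ.rnDeriv volume x).toReal := by
    rw [intervalIntegral.integral_of_le hab]
    exact integral_congr_ae (ae_restrict_of_ae hae)
  rw [h1]
  have h2 : μ (Ioc a b) ≠ ⊤ := by
    rw [hμ, StieltjesFunction.measure_Ioc]; exact ENNReal.ofReal_ne_top
  calc ∫ x in Ioc a b, (μ.rnDeriv volume x).toReal
      ≤ (μ (Ioc a b)).toReal := Measure.setIntegral_toReal_rnDeriv_le h2
    _ = f b - f a := by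
        rw [hμ, StieltjesFunction.measure_Ioc, hst, hst,
          ENNReal.toReal_ofReal (sub_nonneg.2 (hf hab))]

/-- FTC for globally Lipschitz functions. -/
theorem lip_int_deriv_eq {h : ℝ → ℝ} {K : NNReal} (hh : LipschitzWith K h) {a b : ℝ}
    (hab : a ≤ b) : ∫ x in a..b, deriv h x = h b - h a := by
  have hcont : Continuous h := hh.continuous
  have hae : ∀ᵐ x, HasDerivAt h (deriv h x) x := by
    filter_upwards [hh.ae_differentiableAt (μ := volume)] with x hx using hx.hasDerivAt
  have hbd : ∀ᵐ x, |deriv h x| ≤ K := by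
    filter_upwards [hae] with x hx
    have := hx.hasFDerivAt.le_of_lipschitz hh
    rw [ContinuousLinearMap.norm_toSpanSingleton] at this
    simpa using this
  have hK : Monotone (fun x => h x + K * x) := by
    intro x y hxy
    have := hh.dist_le_mul x y
    rw [Real.dist_eq, Real.dist_eq] at this
    have h2 := abs_le.1 this
    have h3 : |x - y| = y - x := by rw [abs_of_nonpos (by linarith)]; ring
    rw [h3] at h2
    simp only []
    linarith [h2.1, h2.2]
  have hKn : Monotone (fun x => -h x + K * x) := by
    intro x y hxy
    have := hh.dist_le_mul x y
    rw [Real.dist_eq, Real.dist_eq] at this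
    have h2 := abs_le.1 this
    have h3 : |x - y| = y - x := by rw [abs_of_nonpos (by linarith)]; ring
    rw [h3] at h2
    simp only []
    linarith [h2.1, h2.2]
  have hmeas : Measurable (deriv h) := measurable_deriv h
  have hint : IntervalIntegrable (deriv h) volume a b := by
    rw [intervalIntegrable_iff]
    have hc : IntegrableOn (fun _ : ℝ => (K : ℝ)) (Ι a b) volume :=
      integrableOn_const measure_Ioc_lt_top.ne
    refine Integrable.mono' hc hmeas.aestronglyMeasurable ?_
    filter_upwards [ae_restrict_of_ae hbd] with x hx
    simpa using hx
  have e1 : ∀ᵐ x, deriv (fun x => h x + K * x) x = deriv h x + K := by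
    filter_upwards [hae] with x hx
    have : HasDerivAt (fun x => h x + (K : ℝ) * x) (deriv h x + K * 1) x :=
      hx.add ((hasDerivAt_id x).const_mul (K : ℝ))
    simpa using this.deriv
  have e2 : ∀ᵐ x, deriv (fun x => -h x + K * x) x = -deriv h x + K := by
    filter_upwards [hae] with x hx
    have : HasDerivAt (fun x => -h x + (K : ℝ) * x) (-deriv h x + K * 1) x :=
      hx.neg.add ((hasDerivAt_id x).const_mul (K : ℝ))
    simpa using this.deriv
  have i1 : ∫ x in a..b, deriv (fun x => h x + K * x) x
      = (∫ x in a..b, deriv h x) + K * (b - a) := by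
    rw [intervalIntegral.integral_congr_ae (by filter_upwards [e1] with x hx _ using hx),
      intervalIntegral.integral_add hint intervalIntegrable_const]
    simp [mul_comm]
  have i2 : ∫ x in a..b, deriv (fun x => -h x + K * x) x
      = -(∫ x in a..b, deriv h x) + K * (b - a) := by
    rw [intervalIntegral.integral_congr_ae (by filter_upwards [e2] with x hx _ using hx)]
    have hadd : ∫ x in a..b, (-deriv h x + K) =
        (∫ x in a..b, -deriv h x) + ∫ _x in a..b, (K : ℝ) :=
      intervalIntegral.integral_add hint.neg intervalIntegrable_const
    rw [hadd, intervalIntegral.integral_neg]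
    simp [mul_comm]
  have m1 := mono_int_deriv_le hK (by continuity) hab
  have m2 := mono_int_deriv_le hKn (by continuity) hab
  rw [i1] at m1
  rw [i2] at m2
  have hr : (K : ℝ) * (b - a) = K * b - K * a := by ring
  linarith

/-- FTC for functions Lipschitz on a closed interval. -/
theorem lipOn_int_deriv_eq {h : ℝ → ℝ} {K : NNReal} {a b : ℝ} (hab : a ≤ b)
    (hh : LipschitzOnWith K h (Icc a b)) : ∫ x in a..b, deriv h x = h b - h a := by
  obtain ⟨H, hH, hEq⟩ := hh.extend_real
  have hcong : ∀ᵐ x, x ∈ Ι a b → deriv h x = deriv H x := by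
    filter_upwards [(Set.countable_singleton b).ae_notMem volume] with x hxb hx
    rw [Set.uIoc_of_le hab] at hx
    have hxo : x ∈ Ioo a b := ⟨hx.1, lt_of_le_of_ne hx.2 (by simpa using hxb)⟩
    have : h =ᶠ[nhds x] H :=
      Filter.eventuallyEq_of_mem (Icc_mem_nhds hxo.1 hxo.2) fun y hy => hEq hy
    exact this.deriv_eq
  rw [intervalIntegral.integral_congr_ae hcong, lip_int_deriv_eq hH hab,
    hEq (left_mem_Icc.2 hab), hEq (right_mem_Icc.2 hab)]

theorem exists_lipschitzOnWith_of_contDiff {g : ℝ → ℝ} (hg : ContDiff ℝ ∞ g) (a b : ℝ) :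
    ∃ K, LipschitzOnWith K g (Icc a b) := by
  obtain ⟨C, hC⟩ := (isCompact_Icc (a := a) (b := b)).exists_bound_of_continuousOn
    ((hg.continuous_fderiv one_le_inf').continuousOn)
  refine ⟨Real.toNNReal C, Convex.lipschitzOnWith_of_nnnorm_hasFDerivWithin_le
    (fun x hx => (hg.differentiable one_le_inf' x).hasFDerivAt.hasFDerivWithinAt)
    (fun x hx => ?_) (convex_Icc a b)⟩
  rw [← NNReal.coe_le_coe, coe_nnnorm, Real.coe_toNNReal']
  exact le_trans (hC x hx) (le_max_left _ _)

theorem elip_mul {a b : ℝ} {f g : ℝ → ℝ}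
    (hf : ∃ K, LipschitzOnWith K f (Icc a b)) (hg : ∃ K, LipschitzOnWith K g (Icc a b)) :
    ∃ K, LipschitzOnWith K (fun x => f x * g x) (Icc a b) := by
  obtain ⟨Kf, hKf⟩ := hf
  obtain ⟨Kg, hKg⟩ := hg
  obtain ⟨Cf, hCf⟩ := (isCompact_Icc (a := a) (b := b)).exists_bound_of_continuousOn
    hKf.continuousOn
  obtain ⟨Cg, hCg⟩ := (isCompact_Icc (a := a) (b := b)).exists_bound_of_continuousOn
    hKg.continuousOn
  refine ⟨Real.toNNReal (Cf * Kg + Cg * Kf), ?_⟩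
  rw [lipschitzOnWith_iff_dist_le_mul]
  intro x hx y hy
  have h1 := hKf.dist_le_mul x hx y hy
  have h2 := hKg.dist_le_mul x hx y hy
  have hfx := hCf x hx
  have hgy := hCg y hy
  rw [Real.norm_eq_abs] at hfx hgy
  rw [Real.dist_eq] at h1 h2 ⊢
  have key : |f x * g x - f y * g y| ≤ |f x| * |g x - g y| + |g y| * |f x - f y| := by
    have : f x * g x - f y * g y = f x * (g x - g y) + g y * (f x - f y) := by ring
    rw [this]
    calc |f x * (g x - g y) + g y * (f x - f y)|
        ≤ |f x * (g x - g y)| + |g y * (f x - f y)| := abs_add_le _ _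
      _ = |f x| * |g x - g y| + |g y| * |f x - f y| := by rw [abs_mul, abs_mul]
  have hCf0 : 0 ≤ Cf := le_trans (abs_nonneg _) hfx
  have hCg0 : 0 ≤ Cg := le_trans (abs_nonneg _) hgy
  have hb : |f x| * |g x - g y| + |g y| * |f x - f y| ≤ (Cf * Kg + Cg * Kf) * |x - y| := by
    have e1 : |f x| * |g x - g y| ≤ Cf * (Kg * |x - y|) :=
      mul_le_mul hfx h2 (abs_nonneg _) hCf0
    have e2 : |g y| * |f x - f y| ≤ Cg * (Kf * |x - y|) :=
      mul_le_mul hgy h1 (abs_nonneg _) hCg0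
    nlinarith [e1, e2]
  have hmax : (Cf * Kg + Cg * Kf : ℝ) ≤ Real.toNNReal (Cf * Kg + Cg * Kf) := by
    rw [Real.coe_toNNReal']
    exact le_max_left _ _
  calc |f x * g x - f y * g y| ≤ (Cf * Kg + Cg * Kf) * |x - y| := le_trans key hb
    _ ≤ Real.toNNReal (Cf * Kg + Cg * Kf) * |x - y| :=
        mul_le_mul_of_nonneg_right hmax (abs_nonneg _)

theorem elip_add {a b : ℝ} {f g : ℝ → ℝ}
    (hf : ∃ K, LipschitzOnWith K f (Icc a b)) (hg : ∃ K, LipschitzOnWith K g (Icc a b)) :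
    ∃ K, LipschitzOnWith K (fun x => f x + g x) (Icc a b) := by
  obtain ⟨Kf, hKf⟩ := hf
  obtain ⟨Kg, hKg⟩ := hg
  exact ⟨Kf + Kg, hKf.add hKg⟩

theorem ae_diff_of_lipschitzOn {g : ℝ → ℝ} {K : NNReal} {a b : ℝ}
    (hg : LipschitzOnWith K g (Icc a b)) :
    ∀ᵐ x, x ∈ Ioo a b → DifferentiableAt ℝ g x := by
  filter_upwards [hg.ae_differentiableWithinAt_of_mem (μ := volume)] with x hx hxo
  exact (hx (Ioo_subset_Icc_self hxo)).differentiableAt (Icc_mem_nhds hxo.1 hxo.2)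

end Helpers

/-- A smooth solution of the thermoviscoelastic system with second sound:
`u, θ, q` are `C^∞` and the three PDEs hold on `(0, L) × (0, ∞)`. -/
def IsSmoothSol (L η β κ τ : ℝ) (m δ p : ℝ → ℝ) (u θ q : ℝ → ℝ → ℝ) : Prop :=
  ContDiff ℝ (⊤ : ℕ∞) (Function.uncurry u) ∧ ContDiff ℝ (⊤ : ℕ∞) (Function.uncurry θ) ∧
    ContDiff ℝ (⊤ : ℕ∞) (Function.uncurry q) ∧
    ∀ x ∈ Ioo (0 : ℝ) L, ∀ t : ℝ, 0 < t →
      (m x * pdt (pdt u) x t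
          - pdx (fun y s => p y * pdx u y s + 2 * δ y * pdt (pdx u) y s) x t
          + η * pdx θ x t = 0) ∧
      (pdt θ x t + κ * pdx q x t + η * pdt (pdx u) x t = 0) ∧
      (τ * pdt q x t + β * q x t + κ * pdx θ x t = 0)

/-- Boundary conditions (D): clamped structure, temperature zero at both ends. -/
def BCD (L : ℝ) (u θ : ℝ → ℝ → ℝ) : Prop :=
  ∀ t : ℝ, 0 ≤ t → u 0 t = 0 ∧ u L t = 0 ∧ θ 0 t = 0 ∧ θ L t = 0

/-- The first-order energy `E₁`. -/
def energy1 (L τ : ℝ) (m p : ℝ → ℝ) (u θ q : ℝ → ℝ → ℝ) (t : ℝ) : ℝ :=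
  (1 / 2) * ((∫ x in (0 : ℝ)..L, p x * (pdx u x t) ^ 2)
    + (∫ x in (0 : ℝ)..L, m x * (pdt u x t) ^ 2)
    + (∫ x in (0 : ℝ)..L, (θ x t) ^ 2)
    + τ * ∫ x in (0 : ℝ)..L, (q x t) ^ 2)

/-- The auxiliary functional `F₁`. -/
def F1 (L : ℝ) (m δ : ℝ → ℝ) (u : ℝ → ℝ → ℝ) (t : ℝ) : ℝ :=
  (∫ x in (0 : ℝ)..L, m x * pdt u x t * u x t)
    + ∫ x in (0 : ℝ)..L, δ x * (pdx u x t) ^ 2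

/-- The remainder `R₁`. -/
def R1 (L η τ : ℝ) (m : ℝ → ℝ) (u θ q : ℝ → ℝ → ℝ) (t : ℝ) : ℝ :=
  (∫ x in (0 : ℝ)..L, (θ x t) ^ 2) + τ * (∫ x in (0 : ℝ)..L, (q x t) ^ 2)
    + 2 * (∫ x in (0 : ℝ)..L, m x * (pdt u x t) ^ 2)
    - η * ∫ x in (0 : ℝ)..L, u x t * pdx θ x t

section MainProof
open Filter Function Metric
open scoped ContDiff Interval

theorem F1_derivative_identity
    (L η β κ τ : ℝ) (hL : 0 < L) (hη : 0 < η) (hβ : 0 < β) (hκ : 0 < κ) (hτ : 0 < τ)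
    (m δ p : ℝ → ℝ)
    (hmLip : ∃ K, LipschitzOnWith K m (Icc 0 L))
    (hδLip : ∃ K, LipschitzOnWith K δ (Icc 0 L))
    (hpLip : ∃ K, LipschitzOnWith K p (Icc 0 L))
    (hmpos : ∀ x ∈ Icc (0 : ℝ) L, 0 < m x)
    (hδpos : ∀ x ∈ Icc (0 : ℝ) L, 0 < δ x)
    (hppos : ∀ x ∈ Icc (0 : ℝ) L, 0 < p x)
    (u θ q : ℝ → ℝ → ℝ)
    (hsol : IsSmoothSol L η β κ τ m δ p u θ q)
    (hbc : BCD L u θ) :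
    ∀ t : ℝ, 0 < t →
      HasDerivAt (F1 L m δ u)
        (-2 * energy1 L τ m p u θ q t + R1 L η τ m u θ q t) t := by
  intro t0 ht0
  obtain ⟨huω, hθω, hqω, hpde⟩ := hsol
  have hu : ContDiff ℝ ∞ (uncurry u) := huω.of_le (by simp)
  have hθ : ContDiff ℝ ∞ (uncurry θ) := hθω.of_le (by simp)
  have hut : ContDiff ℝ ∞ (uncurry (pdt u)) := contDiff_pdt hu
  have hux : ContDiff ℝ ∞ (uncurry (pdx u)) := contDiff_pdx hu
  have hutt : ContDiff ℝ ∞ (uncurry (pdt (pdt u))) := contDiff_pdt hut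
  have huxt : ContDiff ℝ ∞ (uncurry (pdt (pdx u))) := contDiff_pdt hux
  have hθx : ContDiff ℝ ∞ (uncurry (pdx θ)) := contDiff_pdx hθ
  have hmc : ContinuousOn m (Icc 0 L) := hmLip.choose_spec.continuousOn
  have hδc : ContinuousOn δ (Icc 0 L) := hδLip.choose_spec.continuousOn
  have hpc : ContinuousOn p (Icc 0 L) := hpLip.choose_spec.continuousOn
  have hsub : Ι (0:ℝ) L ⊆ Icc 0 L := by
    rw [Set.uIoc_of_le hL.le]; exact Ioc_subset_Icc_self
  have huIcc : uIcc (0:ℝ) L = Icc 0 L := uIcc_of_le hL.le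
  -- the two integrand families
  set Φ : ℝ → ℝ → ℝ := fun s x => m x * pdt u x s * u x s + δ x * (pdx u x s) ^ 2 with hΦ
  set Φ' : ℝ → ℝ → ℝ := fun s x =>
    m x * pdt (pdt u) x s * u x s + m x * pdt u x s ^ 2
      + 2 * δ x * pdx u x s * pdt (pdx u) x s with hΦ'
  have contΦ : ∀ s, ContinuousOn (Φ s) (Icc 0 L) := by
    intro s
    exact ((hmc.mul (cont_slice hut s).continuousOn).mul
        (cont_slice hu s).continuousOn).add
      (hδc.mul (((cont_slice hux s).pow 2).continuousOn))
  have contΦ' : ∀ s, ContinuousOn (Φ' s) (Icc 0 L) := by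
    intro s
    exact (((hmc.mul (cont_slice hutt s).continuousOn).mul
        (cont_slice hu s).continuousOn).add
      (hmc.mul (((cont_slice hut s).pow 2).continuousOn))).add
      (((continuousOn_const.mul hδc).mul (cont_slice hux s).continuousOn).mul
        (cont_slice huxt s).continuousOn)
  have intΦ : ∀ s, IntervalIntegrable (Φ s) volume 0 L := fun s =>
    (huIcc ▸ contΦ s).intervalIntegrable
  have intΦ' : ∀ s, IntervalIntegrable (Φ' s) volume 0 L := fun s =>
    (huIcc ▸ contΦ' s).intervalIntegrable
  -- Step 1: differentiate under the integral sign
  have hbound : ∃ C : ℝ, ∀ x ∈ Ι (0:ℝ) L, ∀ s ∈ ball t0 1, ‖Φ' s x‖ ≤ C := by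
    have hK : IsCompact ((Icc (0:ℝ) L) ×ˢ (Icc (t0-1) (t0+1))) :=
      isCompact_Icc.prod isCompact_Icc
    have hGc : ContinuousOn (fun z : ℝ × ℝ => Φ' z.2 z.1)
        ((Icc (0:ℝ) L) ×ˢ (Icc (t0-1) (t0+1))) := by
      have hm1 : ContinuousOn (fun z : ℝ × ℝ => m z.1)
          ((Icc (0:ℝ) L) ×ˢ (Icc (t0-1) (t0+1))) :=
        hmc.comp continuousOn_fst (fun z hz => hz.1)
      have hδ1 : ContinuousOn (fun z : ℝ × ℝ => δ z.1)
          ((Icc (0:ℝ) L) ×ˢ (Icc (t0-1) (t0+1))) :=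
        hδc.comp continuousOn_fst (fun z hz => hz.1)
      exact (((hm1.mul hutt.continuous.continuousOn).mul hu.continuous.continuousOn).add
        (hm1.mul (hut.continuous.pow 2).continuousOn)).add
        (((continuousOn_const.mul hδ1).mul hux.continuous.continuousOn).mul
          huxt.continuous.continuousOn)
    obtain ⟨C, hC⟩ := hK.exists_bound_of_continuousOn hGc
    refine ⟨C, fun x hx s hs => ?_⟩
    have hsI : s ∈ Icc (t0-1) (t0+1) := by
      rw [Real.ball_eq_Ioo] at hs
      exact Ioo_subset_Icc_self hs
    exact hC (x, s) ⟨hsub hx, hsI⟩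
  obtain ⟨C, hC⟩ := hbound
  have hder : HasDerivAt (fun s => ∫ x in (0:ℝ)..L, Φ s x)
      (∫ x in (0:ℝ)..L, Φ' t0 x) t0 := by
    have := intervalIntegral.hasDerivAt_integral_of_dominated_loc_of_deriv_le
      (F := Φ) (F' := Φ') (x₀ := t0) (a := 0) (b := L) (bound := fun _ => C)
      (ball_mem_nhds t0 one_pos)
      (Eventually.of_forall fun s =>
        ((contΦ s).mono hsub).aestronglyMeasurable measurableSet_uIoc)
      (intΦ t0)
      (((contΦ' t0).mono hsub).aestronglyMeasurable measurableSet_uIoc)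
      (Eventually.of_forall fun x hx s hs => hC x hx s hs)
      intervalIntegrable_const
      (Eventually.of_forall fun x _ s _ => ?_)
    · exact this.2
    · -- pointwise t-derivative
      have h1 := hasDerivAt_pdt hu x s
      have h2 := hasDerivAt_pdt hut x s
      have h3 := hasDerivAt_pdt hux x s
      have hA : HasDerivAt (fun s' => m x * pdt u x s' * u x s')
          ((m x * pdt (pdt u) x s) * u x s + (m x * pdt u x s) * pdt u x s) s :=
        (h2.const_mul (m x)).mul h1
      have hB : HasDerivAt (fun s' => δ x * (pdx u x s') ^ 2)
          (δ x * ((2 : ℕ) * pdx u x s ^ 1 * pdt (pdx u) x s)) s :=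
        (h3.pow 2).const_mul (δ x)
      have := hA.add hB
      convert this using 1
      · rfl
      simp [hΦ']
      ring
  -- Step 2: identify F1 with the single integral
  have hF1eq : F1 L m δ u = fun s => ∫ x in (0:ℝ)..L, Φ s x := by
    funext s
    have i1 : IntervalIntegrable (fun x => m x * pdt u x s * u x s) volume 0 L := by
      apply ContinuousOn.intervalIntegrable
      rw [huIcc]
      exact (hmc.mul (cont_slice hut s).continuousOn).mul (cont_slice hu s).continuousOn
    have i2 : IntervalIntegrable (fun x => δ x * (pdx u x s) ^ 2) volume 0 L := by
      apply ContinuousOn.intervalIntegrable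
      rw [huIcc]
      exact hδc.mul (((cont_slice hux s).pow 2).continuousOn)
    rw [F1]
    exact (intervalIntegral.integral_add i1 i2).symm
  -- Step 3: rewrite the derivative value using the PDE and integration by parts
  -- the flux function at time t0
  set gfun : ℝ → ℝ := fun y => p y * pdx u y t0 + 2 * δ y * pdt (pdx u) y t0 with hgfun
  set hfun : ℝ → ℝ := fun y => gfun y * u y t0 with hhfun
  have hlip_ux : ∃ K, LipschitzOnWith K (fun y => pdx u y t0) (Icc (0:ℝ) L) :=
    exists_lipschitzOnWith_of_contDiff (contDiff_slice hux t0) 0 L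
  have hlip_uxt : ∃ K, LipschitzOnWith K (fun y => pdt (pdx u) y t0) (Icc (0:ℝ) L) :=
    exists_lipschitzOnWith_of_contDiff (contDiff_slice huxt t0) 0 L
  have hlip_u : ∃ K, LipschitzOnWith K (fun y => u y t0) (Icc (0:ℝ) L) :=
    exists_lipschitzOnWith_of_contDiff (contDiff_slice hu t0) 0 L
  have hlip_2δ : ∃ K, LipschitzOnWith K (fun y => 2 * δ y) (Icc (0:ℝ) L) :=
    elip_mul ⟨0, (LipschitzWith.const (2:ℝ)).lipschitzOnWith⟩ hδLip
  have hglip : ∃ K, LipschitzOnWith K gfun (Icc (0:ℝ) L) :=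
    elip_add (elip_mul hpLip hlip_ux) (elip_mul hlip_2δ hlip_uxt)
  have hhlip : ∃ K, LipschitzOnWith K hfun (Icc (0:ℝ) L) := elip_mul hglip hlip_u
  obtain ⟨Kg, hKg⟩ := hglip
  obtain ⟨Kh, hKh⟩ := hhlip
  have hbc0 := hbc t0 ht0.le
  have hFTC : ∫ x in (0:ℝ)..L, deriv hfun x = 0 := by
    rw [lipOn_int_deriv_eq hL.le hKh]
    simp [hhfun, hbc0.1, hbc0.2.1]
  -- the remainder integrand
  set rest : ℝ → ℝ := fun x =>
    m x * pdt u x t0 ^ 2 - p x * pdx u x t0 ^ 2 - η * (u x t0 * pdx θ x t0) with hrest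
  have hrestc : ContinuousOn rest (Icc 0 L) :=
    ((hmc.mul (((cont_slice hut t0).pow 2).continuousOn)).sub
      (hpc.mul (((cont_slice hux t0).pow 2).continuousOn))).sub
      (continuousOn_const.mul
        (((cont_slice hu t0).mul (cont_slice hθx t0)).continuousOn))
  have hrestint : IntervalIntegrable rest volume 0 L :=
    (huIcc ▸ hrestc).intervalIntegrable
  -- a.e. identity on (0, L)
  have hae : ∀ᵐ x, x ∈ Ι (0:ℝ) L → Φ' t0 x = deriv hfun x + rest x := by
    filter_upwards [ae_diff_of_lipschitzOn hKg,
      (Set.countable_singleton L).ae_notMem volume] with x hgx hxL hx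
    rw [Set.uIoc_of_le hL.le] at hx
    have hxo : x ∈ Ioo (0:ℝ) L := ⟨hx.1, lt_of_le_of_ne hx.2 (by simpa using hxL)⟩
    have hd := hgx hxo
    have hpd := (hpde x hxo t0 ht0).1
    have hpdxg : pdx (fun y s => p y * pdx u y s + 2 * δ y * pdt (pdx u) y s) x t0
        = deriv gfun x := rfl
    rw [hpdxg] at hpd
    have hdh : deriv hfun x = deriv gfun x * u x t0 + gfun x * pdx u x t0 := by
      have := (hd.hasDerivAt.mul (hasDerivAt_pdx hu x t0)).deriv
      exact this
    have hgx0 : gfun x = p x * pdx u x t0 + 2 * δ x * pdt (pdx u) x t0 := rfl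
    have hΦ'x : Φ' t0 x = m x * pdt (pdt u) x t0 * u x t0 + m x * pdt u x t0 ^ 2
        + 2 * δ x * pdx u x t0 * pdt (pdx u) x t0 := rfl
    have hrx : rest x
        = m x * pdt u x t0 ^ 2 - p x * pdx u x t0 ^ 2 - η * (u x t0 * pdx θ x t0) := rfl
    rw [hΦ'x, hrx, hdh, hgx0]
    linear_combination (u x t0) * hpd
  -- derivative of hfun is interval integrable
  have hae' : ∀ᵐ x ∂(volume.restrict (Ι (0:ℝ) L)), Φ' t0 x = deriv hfun x + rest x :=
    (ae_restrict_iff' measurableSet_uIoc).2 hae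
  have hdhint : IntervalIntegrable (fun x => deriv hfun x) volume 0 L := by
    refine ((intΦ' t0).sub hrestint).congr_ae ?_
    filter_upwards [hae'] with x hx
    linarith
  -- split the integral
  have hIΦ' : ∫ x in (0:ℝ)..L, Φ' t0 x = ∫ x in (0:ℝ)..L, rest x := by
    rw [intervalIntegral.integral_congr_ae hae, intervalIntegral.integral_add hdhint hrestint,
      hFTC, zero_add]
  -- split rest into three integrals
  have i1 : IntervalIntegrable (fun x => m x * pdt u x t0 ^ 2) volume 0 L := by
    apply ContinuousOn.intervalIntegrable
    rw [huIcc]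
    exact hmc.mul (((cont_slice hut t0).pow 2).continuousOn)
  have i2 : IntervalIntegrable (fun x => p x * pdx u x t0 ^ 2) volume 0 L := by
    apply ContinuousOn.intervalIntegrable
    rw [huIcc]
    exact hpc.mul (((cont_slice hux t0).pow 2).continuousOn)
  have i3 : IntervalIntegrable (fun x => η * (u x t0 * pdx θ x t0)) volume 0 L := by
    apply ContinuousOn.intervalIntegrable
    rw [huIcc]
    exact continuousOn_const.mul (((cont_slice hu t0).mul (cont_slice hθx t0)).continuousOn)
  have hIrest : ∫ x in (0:ℝ)..L, rest x
      = (∫ x in (0:ℝ)..L, m x * pdt u x t0 ^ 2)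
        - (∫ x in (0:ℝ)..L, p x * pdx u x t0 ^ 2)
        - η * ∫ x in (0:ℝ)..L, u x t0 * pdx θ x t0 := by
    rw [hrest]
    rw [intervalIntegral.integral_sub (i1.sub i2) i3, intervalIntegral.integral_sub i1 i2,
      intervalIntegral.integral_const_mul]
  -- final assembly
  have hval : -2 * energy1 L τ m p u θ q t0 + R1 L η τ m u θ q t0
      = ∫ x in (0:ℝ)..L, Φ' t0 x := by
    rw [hIΦ', hIrest, energy1, R1]
    ring
  rw [hval, hF1eq]
  exact hder

end MainProof
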